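/- arXiv:1212.3349 — 8 statements merged into one kernel-verified Lean document; each statement's English description precedes it below -/
import Mathlib

section
/- Let T₁ be (S, ε₁)-firmly nonexpansive and T₂ be (S, ε₂)-firmly nonexpansive on D ⊂ E, and let λ ∈ [0,1]. Then the convex combination λT₁ + (1−λ)T₂ is (S, ε)-firmly nonexpansive on D, where ε = max{ε₁, ε₂}. -/
open RealInnerProductSpace Metric

noncomputable section

variable {E : Type*} [NormedAddCommGroup E] [InnerProductSpace ℝ E]

/-- The (possibly multivalued) metric projector onto a set. -/
def projSet (Ω : Set E) (x : E) : Set E :=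
  {y | y ∈ Ω ∧ ‖x - y‖ = Metric.infDist x Ω}

/-- The (possibly multivalued) reflector across a set. -/
def reflSet (Ω : Set E) (x : E) : Set E :=
  {w | ∃ y ∈ projSet Ω x, w = (2 : ℝ) • y - x}

/-- Pointwise composition of the two reflectors. -/
def rARB (A B : Set E) (x : E) : Set E :=
  ⋃ y ∈ reflSet B x, reflSet A y

/-- The (possibly multivalued) Douglas–Rachford operator. -/
def TDR (A B : Set E) (x : E) : Set E :=
  {w | ∃ z ∈ rARB A B x, w = ((1 : ℝ) / 2) • (z + x)}

/-- The proximal normal cone `cone (P_Ω⁻¹ x - x)`. -/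
def pnCone (Ω : Set E) (x : E) : Set E :=
  {v | ∃ t : ℝ, 0 ≤ t ∧ ∃ z : E, x ∈ projSet Ω z ∧ v = t • (z - x)}

section FirmlyNonexpansive

variable {F : Type*} [SeminormedAddCommGroup F]

def FirmlyNonexpansiveOn (T : F → Set F) (D S : Set F) (ε : ℝ) : Prop :=
  ∀ x ∈ D, ∀ xbar ∈ S, ∀ xp ∈ T x, ∀ xbarp ∈ T xbar,
    ‖xp - xbarp‖ ^ 2 + ‖(x - xp) - (xbar - xbarp)‖ ^ 2 ≤ (1 + ε) * ‖x - xbar‖ ^ 2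

theorem FirmlyNonexpansiveOn.mono {T : F → Set F} {D S : Set F} {ε ε' : ℝ}
    (h : FirmlyNonexpansiveOn T D S ε) (hε : ε ≤ ε') : FirmlyNonexpansiveOn T D S ε' :=
  fun x hx xbar hxbar xp hxp xbarp hxbarp ↦
    (h x hx xbar hxbar xp hxp xbarp hxbarp).trans (by gcongr)

variable [NormedSpace ℝ F]

theorem norm_sq_smul_add_smul_le (u v : F) {a b : ℝ} (ha : 0 ≤ a) (hb : 0 ≤ b) (hab : a + b = 1) :
    ‖a • u + b • v‖ ^ 2 ≤ a * ‖u‖ ^ 2 + b * ‖v‖ ^ 2 :=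
  (convexOn_univ_norm.pow (fun _ _ ↦ norm_nonneg _) 2).2 trivial trivial ha hb hab

def convexComb (lam : ℝ) (T₁ T₂ : F → Set F) (x : F) : Set F :=
  {w | ∃ a ∈ T₁ x, ∃ b ∈ T₂ x, w = lam • a + (1 - lam) • b}

/-- Both the step and the residual of the combined operator are the same convex combination of
those of `T₁` and `T₂`, and `‖·‖ ^ 2` is convex. -/
theorem FirmlyNonexpansiveOn.convexComb {T₁ T₂ : F → Set F} {D S : Set F} {ε lam : ℝ}
    (h₁ : FirmlyNonexpansiveOn T₁ D S ε) (h₂ : FirmlyNonexpansiveOn T₂ D S ε)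
    (hlam0 : 0 ≤ lam) (hlam1 : lam ≤ 1) :
    FirmlyNonexpansiveOn (convexComb lam T₁ T₂) D S ε := by
  rintro x hx xbar hxbar _ ⟨a, ha, b, hb, rfl⟩ _ ⟨a', ha', b', hb', rfl⟩
  have hlam : 0 ≤ 1 - lam := sub_nonneg.mpr hlam1
  have hsum : lam + (1 - lam) = 1 := add_sub_cancel _ _
  have hstep : lam • a + (1 - lam) • b - (lam • a' + (1 - lam) • b')
      = lam • (a - a') + (1 - lam) • (b - b') := by module
  have hres : x - (lam • a + (1 - lam) • b) - (xbar - (lam • a' + (1 - lam) • b'))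
      = lam • (x - a - (xbar - a')) + (1 - lam) • (x - b - (xbar - b')) := by module
  rw [hstep, hres]
  calc _ ≤ (lam * ‖a - a'‖ ^ 2 + (1 - lam) * ‖b - b'‖ ^ 2)
          + (lam * ‖x - a - (xbar - a')‖ ^ 2 + (1 - lam) * ‖x - b - (xbar - b')‖ ^ 2) :=
        add_le_add (norm_sq_smul_add_smul_le _ _ hlam0 hlam hsum)
          (norm_sq_smul_add_smul_le _ _ hlam0 hlam hsum)
    _ = lam * (‖a - a'‖ ^ 2 + ‖x - a - (xbar - a')‖ ^ 2)
          + (1 - lam) * (‖b - b'‖ ^ 2 + ‖x - b - (xbar - b')‖ ^ 2) := by ring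
    _ ≤ lam * ((1 + ε) * ‖x - xbar‖ ^ 2) + (1 - lam) * ((1 + ε) * ‖x - xbar‖ ^ 2) := by
        gcongr
        exacts [h₁ x hx xbar hxbar a ha a' ha', h₂ x hx xbar hxbar b hb b' hb']
    _ = (1 + ε) * ‖x - xbar‖ ^ 2 := by ring

end FirmlyNonexpansive

theorem convex_combination_firmly_nonexpansive_general
    (D S : Set E) (T₁ T₂ : E → Set E) (ε₁ ε₂ : ℝ)
    (lam : ℝ) (hlam0 : 0 ≤ lam) (hlam1 : lam ≤ 1)
    (h₁ : ∀ x ∈ D, ∀ xbar ∈ S, ∀ xp ∈ T₁ x, ∀ xbarp ∈ T₁ xbar,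
        ‖xp - xbarp‖ ^ 2 + ‖(x - xp) - (xbar - xbarp)‖ ^ 2 ≤ (1 + ε₁) * ‖x - xbar‖ ^ 2)
    (h₂ : ∀ x ∈ D, ∀ xbar ∈ S, ∀ xp ∈ T₂ x, ∀ xbarp ∈ T₂ xbar,
        ‖xp - xbarp‖ ^ 2 + ‖(x - xp) - (xbar - xbarp)‖ ^ 2 ≤ (1 + ε₂) * ‖x - xbar‖ ^ 2) :
    ∀ x ∈ D, ∀ xbar ∈ S,
      ∀ xp ∈ {w | ∃ a ∈ T₁ x, ∃ b ∈ T₂ x, w = lam • a + (1 - lam) • b},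
      ∀ xbarp ∈ {w | ∃ a ∈ T₁ xbar, ∃ b ∈ T₂ xbar, w = lam • a + (1 - lam) • b},
        ‖xp - xbarp‖ ^ 2 + ‖(x - xp) - (xbar - xbarp)‖ ^ 2
          ≤ (1 + max ε₁ ε₂) * ‖x - xbar‖ ^ 2 := by
  have h₁' : FirmlyNonexpansiveOn T₁ D S (max ε₁ ε₂) :=
    FirmlyNonexpansiveOn.mono h₁ (le_max_left ε₁ ε₂)
  have h₂' : FirmlyNonexpansiveOn T₂ D S (max ε₁ ε₂) :=
    FirmlyNonexpansiveOn.mono h₂ (le_max_right ε₁ ε₂)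
  exact h₁'.convexComb h₂' hlam0 hlam1

/-- Convex combinations preserve `(S,ε)`-firm nonexpansiveness. -/
theorem convex_combination_firmly_nonexpansive
    (D S : Set E) (T₁ T₂ : E → Set E) (ε₁ ε₂ : ℝ) (hε₁ : 0 ≤ ε₁) (hε₂ : 0 ≤ ε₂)
    (lam : ℝ) (hlam0 : 0 ≤ lam) (hlam1 : lam ≤ 1)
    (h₁ : ∀ x ∈ D, ∀ xbar ∈ S, ∀ xp ∈ T₁ x, ∀ xbarp ∈ T₁ xbar,
        ‖xp - xbarp‖ ^ 2 + ‖(x - xp) - (xbar - xbarp)‖ ^ 2 ≤ (1 + ε₁) * ‖x - xbar‖ ^ 2)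
    (h₂ : ∀ x ∈ D, ∀ xbar ∈ S, ∀ xp ∈ T₂ x, ∀ xbarp ∈ T₂ xbar,
        ‖xp - xbarp‖ ^ 2 + ‖(x - xp) - (xbar - xbarp)‖ ^ 2 ≤ (1 + ε₂) * ‖x - xbar‖ ^ 2) :
    ∀ x ∈ D, ∀ xbar ∈ S,
      ∀ xp ∈ {w | ∃ a ∈ T₁ x, ∃ b ∈ T₂ x, w = lam • a + (1 - lam) • b},
      ∀ xbarp ∈ {w | ∃ a ∈ T₁ xbar, ∃ b ∈ T₂ xbar, w = lam • a + (1 - lam) • b},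
        ‖xp - xbarp‖ ^ 2 + ‖(x - xp) - (xbar - xbarp)‖ ^ 2
          ≤ (1 + max ε₁ ε₂) * ‖x - xbar‖ ^ 2 :=
  convex_combination_firmly_nonexpansive_general D S T₁ T₂ ε₁ ε₂ lam hlam0 hlam1 h₁ h₂
end
end

section
/- The set Ω = {(x₁,x₂) ∈ ℝ² : x₂ ≤ −x₁ if x₁ ≤ 0, and x₂ ≤ 0 if x₁ > 0} is not Clarke regular at the origin, but is (√2/2, ∞)-regular at the origin: for all x, x̄ ∈ Ω and every proximal normal v at x, ⟨v, x̄ − x⟩ ≤ (√2/2)‖v‖‖x̄ − x‖. -/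
/-!
The set `Ω` is the union of the half-planes `{x₂ ≤ 0}` and `{x₁ + x₂ ≤ 0}`. If `x` is the
metric projection onto `Ω` of some point, it is also its projection onto every convex piece of
`Ω` containing `x`, so a proximal normal at `x` is a normal to that piece. Hence
`⟨v, x̄ - x⟩ ≤ 0` when `x` and `x̄` lie in a common half-plane. Otherwise `v` is a nonnegative
multiple of the outer normal of the half-plane through `x`, and `x̄ - x` lies in a wedge making
an angle of at least `π/4` with that normal, which gives the constant `√2/2`.

Clarke regularity fails at the reentrant corner: for every `t > 0` the point `(0, t)` projects
onto `(-t/2, t/2)`, and with `z = (t, 0)` the Clarke quotient equals `√2/2`.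
-/

open RealInnerProductSpace Metric

noncomputable section

variable {E : Type*} [NormedAddCommGroup E] [InnerProductSpace ℝ E]

def IsClarkeRegularAt (Ω : Set E) (xbar : E) : Prop :=
  ∀ ε > (0 : ℝ), ∃ δ > (0 : ℝ), ∀ u z : E, dist u xbar < δ → dist z xbar < δ → z ∈ Ω →
    ∀ y ∈ projSet Ω u, ⟪z - xbar, u - y⟫ ≤ ε * ‖z - xbar‖ * ‖u - y‖

/-- `(ε, ∞)`-regularity. -/
def IsEpsRegular (Ω : Set E) (ε : ℝ) : Prop :=
  ∀ x ∈ Ω, ∀ xbar ∈ Ω, ∀ v ∈ pnCone Ω x, ⟪v, xbar - x⟫ ≤ ε * ‖v‖ * ‖xbar - x‖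

theorem norm_sub_le_of_mem_projSet {F : Type*} [NormedAddCommGroup F] {Ω : Set F} {u y p : F}
    (hy : y ∈ projSet Ω u) (hp : p ∈ Ω) : ‖u - y‖ ≤ ‖u - p‖ := by
  rw [hy.2, ← dist_eq_norm]
  exact infDist_le_dist_of_mem hp

theorem mem_projSet_of_forall_norm_sub_le {F : Type*} [NormedAddCommGroup F] {Ω : Set F}
    {u y : F} (hy : y ∈ Ω) (h : ∀ p ∈ Ω, ‖u - y‖ ≤ ‖u - p‖) : y ∈ projSet Ω u := by
  refine ⟨hy, le_antisymm ((le_infDist ⟨y, hy⟩).2 fun p hp => ?_) ?_⟩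
  · rw [dist_eq_norm]
    exact h p hp
  · rw [← dist_eq_norm]
    exact infDist_le_dist_of_mem hy

theorem convex_halfSpace_inner_le (a : E) (β : ℝ) : Convex ℝ {p : E | ⟪a, p⟫ ≤ β} :=
  convex_halfSpace_le (innerₛₗ ℝ a).isLinear β

theorem inner_nonpos_of_mem_pnCone_of_convex {Ω C : Set E} {x y v : E} (hC : Convex ℝ C)
    (hCΩ : C ⊆ Ω) (hx : x ∈ C) (hy : y ∈ C) (hv : v ∈ pnCone Ω x) : ⟪v, y - x⟫ ≤ 0 := by
  obtain ⟨t, ht, z, hxz, rfl⟩ := hv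
  have : Nonempty C := ⟨⟨x, hx⟩⟩
  have hmin : ‖z - x‖ = ⨅ w : C, ‖z - w‖ :=
    le_antisymm (le_ciInf fun w => norm_sub_le_of_mem_projSet hxz (hCΩ w.2))
      (ciInf_le ⟨0, Set.forall_mem_range.2 fun w : C => norm_nonneg (z - w)⟩ ⟨x, hx⟩)
  rw [real_inner_smul_left]
  exact mul_nonpos_of_nonneg_of_nonpos ht
    ((norm_eq_iInf_iff_real_inner_le_zero hC hx).1 hmin y hy)

theorem exists_nonneg_smul_of_mem_pnCone {Ω : Set E} {a x v : E}
    (hH : {p | ⟪a, p⟫ ≤ ⟪a, x⟫} ⊆ Ω) (hv : v ∈ pnCone Ω x) : ∃ c : ℝ, 0 ≤ c ∧ v = c • a := by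
  have hnormal (y : E) (hy : ⟪a, y⟫ ≤ ⟪a, x⟫) : ⟪v, y - x⟫ ≤ 0 :=
    inner_nonpos_of_mem_pnCone_of_convex (convex_halfSpace_inner_le a _) hH
      (show ⟪a, x⟫ ≤ ⟪a, x⟫ from le_rfl) hy hv
  -- `c • a` is the orthogonal projection of `v` onto `ℝ ∙ a`; `c = 0` when `a = 0`.
  set c := ⟪a, v⟫ / ‖a‖ ^ 2
  have hc : 0 ≤ c := by
    have := hnormal (x - a) (by simp [inner_sub_right])
    rw [sub_sub_cancel_left, inner_neg_right, real_inner_comm] at this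
    exact div_nonneg (by linarith) (by positivity)
  have horth : ⟪a, v - c • a⟫ = 0 := by
    rcases eq_or_ne a 0 with rfl | ha
    · simp
    rw [inner_sub_right, real_inner_smul_right, real_inner_self_eq_norm_sq,
      div_mul_cancel₀ _ (by positivity), sub_self]
  have hzero : v - c • a = 0 := by
    have := hnormal (x + (v - c • a)) (by rw [inner_add_right, horth, add_zero])
    rw [add_sub_cancel_left] at this
    have hself : ⟪v - c • a, v - c • a⟫ = ⟪v, v - c • a⟫ := by
      rw [inner_sub_left, real_inner_smul_left, horth, mul_zero, sub_zero]
    exact inner_self_eq_zero.1 (le_antisymm (hself ▸ this) real_inner_self_nonneg)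
  exact ⟨c, hc, sub_eq_zero.1 hzero⟩

theorem inner_le_of_mem_pnCone_of_halfSpace_subset {Ω : Set E} {a x v d : E} {κ : ℝ}
    (hH : {p | ⟪a, p⟫ ≤ ⟪a, x⟫} ⊆ Ω) (hv : v ∈ pnCone Ω x) (hd : ⟪a, d⟫ ≤ κ * ‖a‖ * ‖d‖) :
    ⟪v, d⟫ ≤ κ * ‖v‖ * ‖d‖ := by
  obtain ⟨c, hc, rfl⟩ := exists_nonneg_smul_of_mem_pnCone hH hv
  rw [real_inner_smul_left, norm_smul, Real.norm_of_nonneg hc]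
  calc c * ⟪a, d⟫ ≤ c * (κ * ‖a‖ * ‖d‖) := mul_le_mul_of_nonneg_left hd hc
    _ = κ * (c * ‖a‖) * ‖d‖ := by ring

theorem inner_le_of_mem_pnCone_union_halfSpaces {a b x xbar v : E} {κ : ℝ} (hκ : 0 ≤ κ)
    (hab : ∀ d, 0 < ⟪a, d⟫ → ⟪b, d⟫ < 0 → ⟪a, d⟫ ≤ κ * ‖a‖ * ‖d‖) (hx : ⟪a, x⟫ ≤ 0)
    (hxbar : xbar ∈ {p | ⟪a, p⟫ ≤ 0} ∪ {p | ⟪b, p⟫ ≤ 0})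
    (hv : v ∈ pnCone ({p | ⟪a, p⟫ ≤ 0} ∪ {p | ⟪b, p⟫ ≤ 0}) x) :
    ⟪v, xbar - x⟫ ≤ κ * ‖v‖ * ‖xbar - x‖ := by
  have hrhs : 0 ≤ κ * ‖v‖ * ‖xbar - x‖ := by positivity
  by_cases hxbarA : ⟪a, xbar⟫ ≤ 0
  · exact (inner_nonpos_of_mem_pnCone_of_convex (convex_halfSpace_inner_le a 0)
      Set.subset_union_left hx hxbarA hv).trans hrhs
  have hxbarB : ⟪b, xbar⟫ ≤ 0 := hxbar.resolve_left hxbarA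
  by_cases hxB : ⟪b, x⟫ ≤ 0
  · exact (inner_nonpos_of_mem_pnCone_of_convex (convex_halfSpace_inner_le b 0)
      Set.subset_union_right hxB hxbarB hv).trans hrhs
  refine inner_le_of_mem_pnCone_of_halfSpace_subset (fun p hp => Or.inl (hp.trans hx)) hv
    (hab _ ?_ ?_) <;> rw [inner_sub_right] <;> linarith [not_le.1 hxbarA, not_le.1 hxB]

theorem isEpsRegular_union_halfSpaces {a b : E} {κ : ℝ} (hκ : 0 ≤ κ)
    (hab : ∀ d, 0 < ⟪a, d⟫ → ⟪b, d⟫ < 0 → ⟪a, d⟫ ≤ κ * ‖a‖ * ‖d‖)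
    (hba : ∀ d, 0 < ⟪b, d⟫ → ⟪a, d⟫ < 0 → ⟪b, d⟫ ≤ κ * ‖b‖ * ‖d‖) :
    IsEpsRegular ({p | ⟪a, p⟫ ≤ 0} ∪ {p | ⟪b, p⟫ ≤ 0}) κ := by
  intro x hx xbar hxbar v hv
  rcases hx with hx | hx
  · exact inner_le_of_mem_pnCone_union_halfSpaces hκ hab hx hxbar hv
  · rw [Set.union_comm] at hxbar hv
    exact inner_le_of_mem_pnCone_union_halfSpaces hκ hba hx hxbar hv

theorem not_isClarkeRegularAt_of_forall_exists {Ω : Set E} {xbar : E} {κ : ℝ} (hκ : 0 < κ)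
    (h : ∀ δ > 0, ∃ u z y, dist u xbar < δ ∧ dist z xbar < δ ∧ z ∈ Ω ∧ y ∈ projSet Ω u ∧
      0 < ⟪z - xbar, u - y⟫ ∧ κ * ‖z - xbar‖ * ‖u - y‖ ≤ ⟪z - xbar, u - y⟫) :
    ¬ IsClarkeRegularAt Ω xbar := by
  intro hreg
  obtain ⟨δ, hδ, hδreg⟩ := hreg (κ / 2) (by positivity)
  obtain ⟨u, z, y, hu, hz, hzΩ, hy, hpos, hlower⟩ := h δ hδ
  have hupper := hδreg u z hu hz hzΩ y hy
  nlinarith [mul_nonneg (norm_nonneg (z - xbar)) (norm_nonneg (u - y))]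

theorem EuclideanSpace.inner_fin_two (p q : EuclideanSpace ℝ (Fin 2)) :
    ⟪p, q⟫ = p 0 * q 0 + p 1 * q 1 := by
  simp only [PiLp.inner_apply, RCLike.inner_apply, conj_trivial, Fin.sum_univ_two]
  ring

theorem EuclideanSpace.norm_sq_fin_two (p : EuclideanSpace ℝ (Fin 2)) :
    ‖p‖ ^ 2 = p 0 ^ 2 + p 1 ^ 2 := by
  simp [EuclideanSpace.real_norm_sq_eq, Fin.sum_univ_two]

def pacman : Set (EuclideanSpace ℝ (Fin 2)) :=
  {p | (p 0 ≤ 0 → p 1 ≤ -p 0) ∧ (0 < p 0 → p 1 ≤ 0)}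

theorem pacman_eq_union :
    pacman = {p | ⟪!₂[0, 1], p⟫ ≤ 0} ∪ {p | ⟪!₂[1, 1], p⟫ ≤ 0} := by
  ext p
  simp only [pacman, Set.mem_union, Set.mem_ofPred_eq, EuclideanSpace.inner_fin_two,
    Matrix.cons_val_zero, Matrix.cons_val_one, Matrix.cons_val_fin_one, zero_mul, one_mul, zero_add]
  constructor
  · rintro ⟨h₁, h₂⟩
    rcases le_or_gt (p 0) 0 with h | h
    · exact Or.inr (by linarith [h₁ h])
    · exact Or.inl (h₂ h)
  · rintro (h | h) <;> constructor <;> intro <;> linarith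

theorem pacman_isEpsRegular : IsEpsRegular pacman (√2 / 2) := by
  have h01 : ‖(!₂[0, 1] : EuclideanSpace ℝ (Fin 2))‖ = 1 := by
    simp [EuclideanSpace.norm_eq]
  have h11 : ‖(!₂[1, 1] : EuclideanSpace ℝ (Fin 2))‖ = √2 := by
    simp [EuclideanSpace.norm_eq]
    norm_num
  rw [pacman_eq_union]
  refine isEpsRegular_union_halfSpaces (by positivity) (fun d h₁ h₂ => ?_) (fun d h₁ h₂ => ?_)
  · rw [h01, mul_one]
    simp only [EuclideanSpace.inner_fin_two, Matrix.cons_val_zero, Matrix.cons_val_one] at *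
    have hsq : (0 * d 0 + 1 * d 1) ^ 2 ≤ (√2 / 2 * ‖d‖) ^ 2 := by
      rw [mul_pow, div_pow, Real.sq_sqrt zero_le_two, EuclideanSpace.norm_sq_fin_two]
      nlinarith
    exact (abs_le_of_sq_le_sq' hsq (by positivity)).2
  · rw [h11, div_mul_eq_mul_div, Real.mul_self_sqrt zero_le_two, div_self two_ne_zero, one_mul]
    simp only [EuclideanSpace.inner_fin_two, Matrix.cons_val_zero, Matrix.cons_val_one] at *
    have hsq : (1 * d 0 + 1 * d 1) ^ 2 ≤ ‖d‖ ^ 2 := by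
      rw [EuclideanSpace.norm_sq_fin_two]
      nlinarith
    exact (abs_le_of_sq_le_sq' hsq (by positivity)).2

theorem pacman_mem_projSet {t : ℝ} (ht : 0 ≤ t) :
    !₂[-t / 2, t / 2] ∈ projSet pacman !₂[0, t] := by
  refine mem_projSet_of_forall_norm_sub_le ?_ fun p hp => ?_
  · simp only [pacman, Set.mem_ofPred_eq,
      Matrix.cons_val_zero, Matrix.cons_val_one, Matrix.cons_val_fin_one]
    constructor <;> intro <;> linarith
  · rw [← sq_le_sq₀ (norm_nonneg _) (norm_nonneg _), EuclideanSpace.norm_sq_fin_two,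
      EuclideanSpace.norm_sq_fin_two]
    rw [pacman_eq_union] at hp
    simp only [Set.mem_union, Set.mem_ofPred_eq, EuclideanSpace.inner_fin_two, PiLp.sub_apply,
      Matrix.cons_val_zero, Matrix.cons_val_one, Matrix.cons_val_fin_one] at hp ⊢
    rcases hp with hp | hp <;> nlinarith [sq_nonneg (p 0 + t - p 1)]

theorem pacman_not_isClarkeRegularAt_zero : ¬ IsClarkeRegularAt pacman 0 := by
  refine not_isClarkeRegularAt_of_forall_exists one_half_pos fun δ hδ => ?_
  obtain ⟨t, ht, htδ⟩ : ∃ t, 0 < t ∧ t < δ := ⟨δ / 2, by positivity, by linarith⟩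
  have hnorm : ‖!₂[0, t] - (!₂[-t / 2, t / 2] : EuclideanSpace ℝ (Fin 2))‖ ≤ t := by
    rw [← sq_le_sq₀ (norm_nonneg _) ht.le, EuclideanSpace.norm_sq_fin_two]
    simp only [PiLp.sub_apply, Matrix.cons_val_zero, Matrix.cons_val_one, Matrix.cons_val_fin_one]
    nlinarith
  have hz : ‖(!₂[t, 0] : EuclideanSpace ℝ (Fin 2))‖ = t := by
    simp [EuclideanSpace.norm_eq, ht.le]
  refine ⟨!₂[0, t], !₂[t, 0], _, ?_, ?_, ?_, pacman_mem_projSet ht.le, ?_, ?_⟩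
  · simpa [EuclideanSpace.norm_eq, ht.le] using htδ
  · simpa [hz] using htδ
  · simp only [pacman, Set.mem_ofPred_eq,
      Matrix.cons_val_zero, Matrix.cons_val_one, Matrix.cons_val_fin_one]
    constructor <;> intro <;> linarith
  · simp only [sub_zero, EuclideanSpace.inner_fin_two, PiLp.sub_apply,
      Matrix.cons_val_zero, Matrix.cons_val_one, Matrix.cons_val_fin_one]
    nlinarith
  · simp only [sub_zero, hz, EuclideanSpace.inner_fin_two, PiLp.sub_apply,
      Matrix.cons_val_zero, Matrix.cons_val_one, Matrix.cons_val_fin_one]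
    nlinarith

/-- The pacman-type set is not Clarke regular at the origin but is
`(√2/2, ∞)`-regular there. -/
theorem not_clarke_but_eps_regular :
    let Ω : Set (EuclideanSpace ℝ (Fin 2)) :=
      {p | (p 0 ≤ 0 → p 1 ≤ -p 0) ∧ (0 < p 0 → p 1 ≤ 0)}
    (¬ ∀ ε > (0 : ℝ), ∃ δ > (0 : ℝ),
        ∀ u z : EuclideanSpace ℝ (Fin 2), dist u 0 < δ → dist z 0 < δ → z ∈ Ω →
          ∀ y ∈ projSet Ω u, ⟪z - 0, u - y⟫ ≤ ε * ‖z - 0‖ * ‖u - y‖) ∧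
    (∀ x ∈ Ω, ∀ xbar ∈ Ω, ∀ v ∈ pnCone Ω x,
        ⟪v, xbar - x⟫ ≤ (Real.sqrt 2 / 2) * ‖v‖ * ‖xbar - x‖) := by
  intro Ω
  exact ⟨pacman_not_isClarkeRegularAt_zero, pacman_isEpsRegular⟩
end
end

section
/- Let A, B ⊂ E be closed, nonempty, and respectively (ε_A,δ)- and (ε_B,δ)-subregular at x̂ with respect to S ⊂ B_δ(x̂) ∩ (A ∩ B). Let U = {z ∈ E : P_B z ⊂ B_δ(x̂) and P_A R_B z ⊂ B_δ(x̂)}. Then the Douglas–Rachford operator T_DR = ½(R_A R_B + Id) is (S, ε̃)-firmly nonexpansive on U with ε̃ = 2ε_A(1+ε_A) + 2ε_B(1+ε_B) + 8ε_A(1+ε_A)ε_B(1+ε_B): for all x ∈ U, x₊ ∈ T_DR x, x̄ ∈ S, ‖x₊ − x̄‖² + ‖x − x₊‖² ≤ (1+ε̃)‖x − x̄‖². -/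
/-!
Each reflector enlarges the distance to a point `x̄ ∈ S` by a controlled factor: if `y ∈ P_Ω x`
and `x̄ ∈ Ω`, then `‖(2y - x) - x̄‖² = ‖x - x̄‖² + 4⟪x - y, x̄ - y⟫`, and subregularity bounds the
inner product by `ε ‖x - y‖ ‖x̄ - y‖ ≤ ε (1 + ε) ‖x - x̄‖²`, giving the factor `1 + 4ε(1 + ε)`.
Composing the two reflectors and averaging with the identity (parallelogram law) halves the
excess, which is exactly `ε̃`.
-/

open RealInnerProductSpace Metric

noncomputable section

variable {E : Type*} [NormedAddCommGroup E] [InnerProductSpace ℝ E]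

omit [InnerProductSpace ℝ E] in
lemma norm_sub_le_of_mem_projSet_s12 {Ω : Set E} {x y a : E} (hy : y ∈ projSet Ω x) (ha : a ∈ Ω) :
    ‖x - y‖ ≤ ‖x - a‖ := by
  rw [hy.2, ← dist_eq_norm]
  exact infDist_le_dist_of_mem ha

lemma sub_mem_pnCone_of_mem_projSet {Ω : Set E} {x y : E} (hy : y ∈ projSet Ω x) :
    x - y ∈ pnCone Ω y :=
  ⟨1, zero_le_one, x, hy, (one_smul ℝ _).symm⟩

lemma norm_two_smul_sub_sub_sq (x y a : E) :
    ‖(2 : ℝ) • y - x - a‖ ^ 2 = ‖x - a‖ ^ 2 + 4 * ⟪x - y, a - y⟫ := by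
  have hxa : x - a = (x - y) - (a - y) := by abel
  have hrefl : (2 : ℝ) • y - x - a = -((x - y) + (a - y)) := by module
  rw [hrefl, norm_neg, hxa, norm_add_sq_real (x - y), norm_sub_sq_real (x - y)]
  ring

lemma norm_sub_le_one_add_mul_of_inner_le {x y a : E} {ε : ℝ} (hε : 0 ≤ ε)
    (hclose : ‖x - y‖ ≤ ‖x - a‖) (hinner : ⟪x - y, a - y⟫ ≤ ε * ‖x - y‖ * ‖a - y‖) :
    ‖a - y‖ ≤ (1 + ε) * ‖x - a‖ := by
  have htri : ‖a - y‖ ≤ ‖x - a‖ + ‖x - y‖ := by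
    rw [norm_sub_rev x a]; exact norm_sub_le_norm_sub_add_norm_sub a x y
  -- For `ε ≥ 1` the triangle inequality suffices; for `ε ≤ 1` complete the square in the
  -- expansion of `‖x - a‖²`.
  rcases le_total 1 ε with h1 | h1
  · nlinarith [norm_nonneg (x - a)]
  · have hxa : x - a = (x - y) - (a - y) := by abel
    have hsq : ‖x - a‖ ^ 2 = ‖x - y‖ ^ 2 - 2 * ⟪x - y, a - y⟫ + ‖a - y‖ ^ 2 := by
      rw [hxa, norm_sub_sq_real]
    have hshift : (‖a - y‖ - ε * ‖x - y‖) ^ 2 ≤ ‖x - a‖ ^ 2 := by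
      nlinarith [mul_nonneg (mul_nonneg (sub_nonneg.2 h1) (by linarith : (0 : ℝ) ≤ 1 + ε))
        (sq_nonneg ‖x - y‖)]
    have := abs_le_of_sq_le_sq' hshift (norm_nonneg _)
    nlinarith [mul_le_mul_of_nonneg_left hclose hε]

lemma norm_reflection_sub_sq_le {Ω : Set E} {x y a : E} {ε : ℝ} (hε : 0 ≤ ε)
    (hy : y ∈ projSet Ω x) (ha : a ∈ Ω) (hinner : ⟪x - y, a - y⟫ ≤ ε * ‖x - y‖ * ‖a - y‖) :
    ‖(2 : ℝ) • y - x - a‖ ^ 2 ≤ (1 + 4 * ε * (1 + ε)) * ‖x - a‖ ^ 2 := by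
  have hclose := norm_sub_le_of_mem_projSet_s12 hy ha
  have hfar := norm_sub_le_one_add_mul_of_inner_le hε hclose hinner
  have hprod : ε * ‖x - y‖ * ‖a - y‖ ≤ ε * ‖x - a‖ * ((1 + ε) * ‖x - a‖) := by
    gcongr
  rw [norm_two_smul_sub_sub_sq]
  nlinarith

lemma norm_midpoint_sub_sq_add_norm_sub_midpoint_sq (z x a : E) :
    ‖((1 : ℝ) / 2) • (z + x) - a‖ ^ 2 + ‖x - ((1 : ℝ) / 2) • (z + x)‖ ^ 2
      = (1 / 2) * (‖z - a‖ ^ 2 + ‖x - a‖ ^ 2) := by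
  have hmid : ((1 : ℝ) / 2) • (z + x) - a = ((1 : ℝ) / 2) • ((z - a) + (x - a)) := by module
  have hhalf : x - ((1 : ℝ) / 2) • (z + x) = ((1 : ℝ) / 2) • ((x - a) - (z - a)) := by module
  rw [hmid, hhalf, norm_smul, norm_smul, mul_pow, mul_pow, norm_add_sq_real (z - a),
    norm_sub_sq_real (x - a), real_inner_comm (x - a)]
  norm_num
  ring

theorem TDR_firmly_nonexpansive_subregular_general
    (A B : Set E)
    (S : Set E) (xhat : E) (εA εB δ : ℝ) (hεA : 0 ≤ εA) (hεB : 0 ≤ εB)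
    (hSsub : S ⊆ Metric.closedBall xhat δ ∩ (A ∩ B))
    (hsubA : ∀ x ∈ Metric.closedBall xhat δ ∩ A, ∀ xbar ∈ S ∩ Metric.closedBall xhat δ,
        ∀ v ∈ pnCone A x, ⟪v, xbar - x⟫ ≤ εA * ‖v‖ * ‖xbar - x‖)
    (hsubB : ∀ x ∈ Metric.closedBall xhat δ ∩ B, ∀ xbar ∈ S ∩ Metric.closedBall xhat δ,
        ∀ v ∈ pnCone B x, ⟪v, xbar - x⟫ ≤ εB * ‖v‖ * ‖xbar - x‖) :
    ∀ x ∈ {z : E | projSet B z ⊆ Metric.closedBall xhat δ ∧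
        (∀ y ∈ reflSet B z, projSet A y ⊆ Metric.closedBall xhat δ)},
      ∀ xp ∈ TDR A B x, ∀ xbar ∈ S,
        ‖xp - xbar‖ ^ 2 + ‖x - xp‖ ^ 2
          ≤ (1 + (2 * εA * (1 + εA) + 2 * εB * (1 + εB)
              + 8 * εA * (1 + εA) * εB * (1 + εB))) * ‖x - xbar‖ ^ 2 := by
  rintro x ⟨hPB, hPA⟩ xp ⟨z, hz, rfl⟩ xbar hxbar
  obtain ⟨w, ⟨yB, hyB, rfl⟩, yA, hyA, rfl⟩ := Set.mem_iUnion₂.1 hz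
  obtain ⟨hxbar_ball, hxbarA, hxbarB⟩ := hSsub hxbar
  have hreflB := norm_reflection_sub_sq_le hεB hyB hxbarB
    (hsubB yB ⟨hPB hyB, hyB.1⟩ xbar ⟨hxbar, hxbar_ball⟩ _ (sub_mem_pnCone_of_mem_projSet hyB))
  have hreflA := norm_reflection_sub_sq_le hεA hyA hxbarA
    (hsubA yA ⟨hPA _ ⟨yB, hyB, rfl⟩ hyA, hyA.1⟩ xbar ⟨hxbar, hxbar_ball⟩ _
      (sub_mem_pnCone_of_mem_projSet hyA))
  calc _ = (1 / 2) * (‖(2 : ℝ) • yA - ((2 : ℝ) • yB - x) - xbar‖ ^ 2 + ‖x - xbar‖ ^ 2) :=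
        norm_midpoint_sub_sq_add_norm_sub_midpoint_sq _ _ _
    _ ≤ (1 / 2) * ((1 + 4 * εA * (1 + εA)) * ((1 + 4 * εB * (1 + εB)) * ‖x - xbar‖ ^ 2)
          + ‖x - xbar‖ ^ 2) := by
        gcongr
        exact hreflA.trans (by gcongr)
    _ = _ := by ring

/-- `(S, ε̃)`-firm nonexpansiveness of the Douglas–Rachford operator for subregular sets. -/
theorem TDR_firmly_nonexpansive_subregular
    (A B : Set E) (hA : A.Nonempty) (hB : B.Nonempty)
    (hAc : IsClosed A) (hBc : IsClosed B)
    (S : Set E) (xhat : E) (εA εB δ : ℝ) (hεA : 0 ≤ εA) (hεB : 0 ≤ εB) (hδ : 0 < δ)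
    (hSsub : S ⊆ Metric.closedBall xhat δ ∩ (A ∩ B))
    (hsubA : ∀ x ∈ Metric.closedBall xhat δ ∩ A, ∀ xbar ∈ S ∩ Metric.closedBall xhat δ,
        ∀ v ∈ pnCone A x, ⟪v, xbar - x⟫ ≤ εA * ‖v‖ * ‖xbar - x‖)
    (hsubB : ∀ x ∈ Metric.closedBall xhat δ ∩ B, ∀ xbar ∈ S ∩ Metric.closedBall xhat δ,
        ∀ v ∈ pnCone B x, ⟪v, xbar - x⟫ ≤ εB * ‖v‖ * ‖xbar - x‖) :
    ∀ x ∈ {z : E | projSet B z ⊆ Metric.closedBall xhat δ ∧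
        (∀ y ∈ reflSet B z, projSet A y ⊆ Metric.closedBall xhat δ)},
      ∀ xp ∈ TDR A B x, ∀ xbar ∈ S,
        ‖xp - xbar‖ ^ 2 + ‖x - xp‖ ^ 2
          ≤ (1 + (2 * εA * (1 + εA) + 2 * εB * (1 + εB)
              + 8 * εA * (1 + εA) * εB * (1 + εB))) * ‖x - xbar‖ ^ 2 :=
  TDR_firmly_nonexpansive_subregular_general A B S xhat εA εB δ hεA hεB hSsub hsubA hsubB
end
end

section
/- Let D ⊂ E, S ⊂ Fix T, T : D ⇉ E, U ⊂ D. If (a) T is (S, ε)-firmly nonexpansive on U, and (b) there is λ > 0 with ‖x − x₊‖ ≥ λ dist(x, S) for all x₊ ∈ Tx, x ∈ U, then dist(x₊, S) ≤ √(1 + ε − λ²) · dist(x, S) for all x₊ ∈ Tx, x ∈ U. -/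
open RealInnerProductSpace Metric

noncomputable section

variable {E : Type*} [NormedAddCommGroup E] [InnerProductSpace ℝ E]

/-! Bounding `dist(x₊, S)` by `‖x₊ - x̄‖` in the firm nonexpansiveness inequality and passing to
the infimum over `x̄ ∈ S` gives `dist(x₊, S)² + ‖x - x₊‖² ≤ (1 + ε) dist(x, S)²`; coercivity then
subtracts `λ² dist(x, S)²` from the right-hand side. No projection onto `S` is needed: the
infimum is reached through the closure of the set of distances. -/

theorem Metric.le_apply_infDist_of_forall_le {α : Type*} [PseudoMetricSpace α] {s : Set α}
    {x : α} {f : ℝ → ℝ} {c : ℝ} (hs : s.Nonempty) (hf : Continuous f)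
    (h : ∀ y ∈ s, c ≤ f (dist x y)) : c ≤ f (infDist x s) := by
  have hclosed : IsClosed (f ⁻¹' Set.Ici c) := isClosed_Ici.preimage hf
  have himage : (dist x ·) '' s ⊆ f ⁻¹' Set.Ici c := Set.image_subset_iff.2 h
  exact hclosed.closure_subset_iff.2 himage ((isGLB_infDist hs).mem_closure (hs.image _))

theorem Real.le_sqrt_mul_of_sq_le_mul_sq {a b c : ℝ} (ha : 0 ≤ a) (hb : 0 ≤ b)
    (h : a ^ 2 ≤ c * b ^ 2) : a ≤ √c * b :=
  calc a = √(a ^ 2) := (Real.sqrt_sq ha).symm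
    _ ≤ √(c * b ^ 2) := Real.sqrt_le_sqrt h
    _ = √c * b := by rw [Real.sqrt_mul' c (sq_nonneg b), Real.sqrt_sq hb]

theorem dist_decrease_of_firmly_nonexpansive_coercive_general
    (S U : Set E) (hS : S.Nonempty)
    (T : E → Set E)
    (ε lam : ℝ) (hlam : 0 < lam)
    (ha : ∀ x ∈ U, ∀ xbar ∈ S, ∀ xp ∈ T x,
        ‖xp - xbar‖ ^ 2 + ‖x - xp‖ ^ 2 ≤ (1 + ε) * ‖x - xbar‖ ^ 2)
    (hb : ∀ x ∈ U, ∀ xp ∈ T x, ‖x - xp‖ ≥ lam * Metric.infDist x S) :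
    ∀ x ∈ U, ∀ xp ∈ T x,
      Metric.infDist xp S ≤ Real.sqrt (1 + ε - lam ^ 2) * Metric.infDist x S := by
  intro x hx xp hxp
  have hpointwise : ∀ y ∈ S, infDist xp S ^ 2 + ‖x - xp‖ ^ 2 ≤ (1 + ε) * dist x y ^ 2 := by
    intro y hy
    have hproj : infDist xp S ^ 2 ≤ ‖xp - y‖ ^ 2 := by
      rw [← dist_eq_norm]
      exact pow_le_pow_left₀ infDist_nonneg (infDist_le_dist_of_mem hy) 2
    rw [dist_eq_norm]
    linarith [ha x hx y hy xp hxp]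
  have hfirm : infDist xp S ^ 2 + ‖x - xp‖ ^ 2 ≤ (1 + ε) * infDist x S ^ 2 :=
    le_apply_infDist_of_forall_le (f := fun t ↦ (1 + ε) * t ^ 2) hS (by fun_prop)
      hpointwise
  have hcoercive : (lam * infDist x S) ^ 2 ≤ ‖x - xp‖ ^ 2 :=
    pow_le_pow_left₀ (mul_nonneg hlam.le infDist_nonneg) (hb x hx xp hxp) 2
  exact Real.le_sqrt_mul_of_sq_le_mul_sq infDist_nonneg infDist_nonneg (by linarith)

/-- Linear decrease of the distance to `S` for `(S,ε)`-firmly nonexpansive coercive maps. -/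
theorem dist_decrease_of_firmly_nonexpansive_coercive
    (D S U : Set E) (hU : U ⊆ D) (hS : S.Nonempty) (hSc : IsClosed S)
    (T : E → Set E) (hfix : ∀ x ∈ S, x ∈ T x)
    (ε lam : ℝ) (hε : 0 ≤ ε) (hlam : 0 < lam)
    (ha : ∀ x ∈ U, ∀ xbar ∈ S, ∀ xp ∈ T x,
        ‖xp - xbar‖ ^ 2 + ‖x - xp‖ ^ 2 ≤ (1 + ε) * ‖x - xbar‖ ^ 2)
    (hb : ∀ x ∈ U, ∀ xp ∈ T x, ‖x - xp‖ ≥ lam * Metric.infDist x S) :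
    ∀ x ∈ U, ∀ xp ∈ T x,
      Metric.infDist xp S ≤ Real.sqrt (1 + ε - lam ^ 2) * Metric.infDist x S :=
  dist_decrease_of_firmly_nonexpansive_coercive_general S U hS T ε lam hlam ha hb
end
end

section
/- Let A, B be nonempty closed subsets of E with B convex, and suppose {A,B} is locally linearly regular at x̂ ∈ A ∩ B on B_δ(x̂) with constant κ. Then for all x ∈ A ∩ B_δ(x̂), dist(P_B x, A ∩ B) ≤ √(1 − 1/κ²) · dist(x, A ∩ B). -/
open RealInnerProductSpace Metric

noncomputable section

variable {E : Type*} [NormedAddCommGroup E] [InnerProductSpace ℝ E]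

/-!
Write `d = dist(x, A ∩ B)` and `h = ‖x - P_B x‖`. Since `x ∈ A`, regularity gives `d ≤ κ h`.
Since `B` is convex, the angle at `P_B x` between `x` and any point of `A ∩ B ⊆ B` is obtuse, so
`dist(P_B x, A ∩ B)² + h² ≤ d²`, and hence `dist(P_B x, A ∩ B)² ≤ d² - d²/κ²`.
-/

theorem Metric.infDist_eq_dist_of_forall_dist_le {α : Type*} [PseudoMetricSpace α] {s : Set α}
    {x y : α} (hy : y ∈ s) (hmin : ∀ z ∈ s, dist x y ≤ dist x z) : infDist x s = dist x y :=
  le_antisymm (infDist_le_dist_of_mem hy) ((le_infDist ⟨y, hy⟩).2 hmin)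

section NearestPoint

variable {B : Set E} {x y : E}

theorem Convex.real_inner_sub_le_zero_of_forall_norm_sub_le (hB : Convex ℝ B) (hy : y ∈ B)
    (hmin : ∀ z ∈ B, ‖x - y‖ ≤ ‖x - z‖) : ∀ z ∈ B, ⟪x - y, z - y⟫ ≤ 0 := by
  have : Nonempty B := ⟨⟨y, hy⟩⟩
  refine (norm_eq_iInf_iff_real_inner_le_zero hB hy).1 (le_antisymm ?_ ?_)
  · exact le_ciInf fun z => hmin z z.2
  · exact ciInf_le ⟨0, Set.forall_mem_range.2 fun _ => norm_nonneg _⟩ (⟨y, hy⟩ : B)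

theorem Convex.norm_sub_sq_add_norm_sub_sq_le (hB : Convex ℝ B) (hy : y ∈ B)
    (hmin : ∀ z ∈ B, ‖x - y‖ ≤ ‖x - z‖) {z : E} (hz : z ∈ B) :
    ‖y - z‖ ^ 2 + ‖x - y‖ ^ 2 ≤ ‖x - z‖ ^ 2 := by
  have hobtuse := hB.real_inner_sub_le_zero_of_forall_norm_sub_le hy hmin z hz
  have hlaw : ‖x - z‖ ^ 2 = ‖x - y‖ ^ 2 - 2 * ⟪x - y, z - y⟫ + ‖z - y‖ ^ 2 := by
    rw [← norm_sub_sq_real]; congr 2; abel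
  rw [hlaw, norm_sub_rev y z]
  linarith

theorem Convex.infDist_sq_add_norm_sub_sq_le (hB : Convex ℝ B) (hy : y ∈ B)
    (hmin : ∀ z ∈ B, ‖x - y‖ ≤ ‖x - z‖) {S : Set E} (hS : S.Nonempty) (hSB : S ⊆ B) :
    infDist y S ^ 2 + ‖x - y‖ ^ 2 ≤ infDist x S ^ 2 := by
  suffices √(infDist y S ^ 2 + ‖x - y‖ ^ 2) ≤ infDist x S from (Real.sqrt_le_iff.1 this).2
  refine (le_infDist hS).2 fun z hz => Real.sqrt_le_iff.2 ⟨dist_nonneg, ?_⟩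
  calc infDist y S ^ 2 + ‖x - y‖ ^ 2
      ≤ ‖y - z‖ ^ 2 + ‖x - y‖ ^ 2 := by
        gcongr
        · exact infDist_nonneg
        · exact dist_eq_norm y z ▸ infDist_le_dist_of_mem hz
    _ ≤ ‖x - z‖ ^ 2 := hB.norm_sub_sq_add_norm_sub_sq_le hy hmin (hSB hz)
    _ = dist x z ^ 2 := by rw [dist_eq_norm]

end NearestPoint

theorem le_sqrt_one_sub_inv_sq_mul {q h d κ : ℝ} (hqhd : q ^ 2 + h ^ 2 ≤ d ^ 2) (hd : 0 ≤ d)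
    (hh : 0 ≤ h) (hdκ : d ≤ κ * h) : q ≤ √(1 - (1 / κ) ^ 2) * d := by
  have hdiv : d / |κ| ≤ h :=
    div_le_of_le_mul₀ (abs_nonneg κ) hh
      (hdκ.trans ((mul_le_mul_of_nonneg_right (le_abs_self κ) hh).trans_eq (mul_comm _ _)))
  have hdiv_sq : (d / κ) ^ 2 ≤ h ^ 2 := by
    rw [div_pow, ← sq_abs κ, ← div_pow]
    exact pow_le_pow_left₀ (by positivity) hdiv 2
  have hq_sq : q ^ 2 ≤ (1 - (1 / κ) ^ 2) * d ^ 2 := by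
    have : (1 - (1 / κ) ^ 2) * d ^ 2 = d ^ 2 - (d / κ) ^ 2 := by ring
    linarith
  calc q ≤ |q| := le_abs_self q
    _ ≤ √((1 - (1 / κ) ^ 2) * d ^ 2) := Real.abs_le_sqrt hq_sq
    _ = √(1 - (1 / κ) ^ 2) * d := by rw [Real.sqrt_mul' _ (sq_nonneg d), Real.sqrt_sq hd]

theorem proj_convex_linear_decrease_general
    (A B : Set E) (hBconv : Convex ℝ B)
    (xhat : E) (hxhat : xhat ∈ A ∩ B) (δ κ : ℝ)
    (PB : E → E)
    (hPB : ∀ x : E, PB x ∈ B ∧ ∀ y ∈ B, ‖x - PB x‖ ≤ ‖x - y‖)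
    (hreg : ∀ x ∈ Metric.closedBall xhat δ,
        Metric.infDist x (A ∩ B) ≤ κ * max (Metric.infDist x A) (Metric.infDist x B)) :
    ∀ x ∈ A ∩ Metric.closedBall xhat δ,
      Metric.infDist (PB x) (A ∩ B)
        ≤ Real.sqrt (1 - (1 / κ) ^ 2) * Metric.infDist x (A ∩ B) := by
  rintro x ⟨hxA, hxball⟩
  obtain ⟨hPB_mem, hPB_min⟩ := hPB x
  have hdist_AB : infDist x (A ∩ B) ≤ κ * ‖x - PB x‖ := by
    have hdist_B : infDist x B = ‖x - PB x‖ := by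
      rw [infDist_eq_dist_of_forall_dist_le hPB_mem fun z hz => ?_, dist_eq_norm]
      simpa only [dist_eq_norm] using hPB_min z hz
    simpa [infDist_zero_of_mem hxA, hdist_B] using hreg x hxball
  exact le_sqrt_one_sub_inv_sq_mul
    (hBconv.infDist_sq_add_norm_sub_sq_le hPB_mem hPB_min ⟨xhat, hxhat⟩ Set.inter_subset_right)
    infDist_nonneg (norm_nonneg _) hdist_AB

/-- Projections onto a convex set under local linear regularity (Gubin–Polyak–Raik). -/
theorem proj_convex_linear_decrease
    (A B : Set E) (hA : A.Nonempty) (hB : B.Nonempty)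
    (hAc : IsClosed A) (hBc : IsClosed B) (hBconv : Convex ℝ B)
    (xhat : E) (hxhat : xhat ∈ A ∩ B) (δ κ : ℝ) (hδ : 0 < δ) (hκ : 0 < κ)
    (PB : E → E)
    (hPB : ∀ x : E, PB x ∈ B ∧ ∀ y ∈ B, ‖x - PB x‖ ≤ ‖x - y‖)
    (hreg : ∀ x ∈ Metric.closedBall xhat δ,
        Metric.infDist x (A ∩ B) ≤ κ * max (Metric.infDist x A) (Metric.infDist x B)) :
    ∀ x ∈ A ∩ Metric.closedBall xhat δ,
      Metric.infDist (PB x) (A ∩ B)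
        ≤ Real.sqrt (1 - (1 / κ) ^ 2) * Metric.infDist x (A ∩ B) :=
  proj_convex_linear_decrease_general A B hBconv xhat hxhat δ κ PB hPB hreg
end
end

section
/- Let A, B be nonempty closed convex subsets of E with {A,B} locally linearly regular at x̂ ∈ S = A∩B on B_δ(x̂) with constant κ, and set γ = 1/κ. For x₀ ∈ B_δ(x̂) ∩ A, define x_{2n+1} = P_B x_{2n} and x_{2n+2} = P_A x_{2n+1}. Then dist(x_{2n+2}, S) ≤ (1 − γ²) dist(x_{2n}, S) for all n ≥ 0. -/
open RealInnerProductSpace Metric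

noncomputable section

variable {E : Type*} [NormedAddCommGroup E] [InnerProductSpace ℝ E]

/-!
If `p` is the nearest point of `u` in a convex set `K ⊇ S`, then `‖p - s‖² + ‖u - p‖² ≤ ‖u - s‖²`
for every `s ∈ S`, whence `d(p, S)² + d(u, K)² ≤ d(u, S)²`. Along the iteration `x₂ₙ ∈ A` and
`x₂ₙ₊₁ ∈ B`, so linear regularity reads `d(x, S) ≤ κ d(x, K)` for the set `K` projected onto next:
each projection multiplies `d(·, S)²` by at most `1 - γ²`, two of them multiply `d(·, S)` by at
most `1 - γ²`. The iterates never move away from `x̂ ∈ S`, so they stay in the ball. When `κ < 1`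
the factor `1 - γ²` is negative, but then regularity forces `d(·, S) = 0` on the whole ball.
-/

def IsNearestPoint (K : Set E) (u p : E) : Prop :=
  p ∈ K ∧ ∀ y ∈ K, ‖u - p‖ ≤ ‖u - y‖

namespace IsNearestPoint

variable {K : Set E} {u p s : E}

lemma real_inner_le_zero (hK : Convex ℝ K) (h : IsNearestPoint K u p) :
    ∀ y ∈ K, ⟪u - p, y - p⟫ ≤ 0 := by
  have : Nonempty K := ⟨⟨p, h.1⟩⟩
  refine (norm_eq_iInf_iff_real_inner_le_zero hK h.1).1 (le_antisymm ?_ ?_)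
  · exact le_ciInf fun y => h.2 y y.2
  · exact ciInf_le (f := fun y : K => ‖u - y‖)
      ⟨0, Set.forall_mem_range.2 fun _ => norm_nonneg _⟩ ⟨p, h.1⟩

lemma norm_sub_sq_add_norm_sub_sq_le (hK : Convex ℝ K) (h : IsNearestPoint K u p)
    (hs : s ∈ K) : ‖p - s‖ ^ 2 + ‖u - p‖ ^ 2 ≤ ‖u - s‖ ^ 2 := by
  have hinner := h.real_inner_le_zero hK s hs
  have hflip : ⟪u - p, p - s⟫ = -⟪u - p, s - p⟫ := by
    rw [← inner_neg_right, neg_sub]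
  rw [show u - s = (u - p) + (p - s) by abel, norm_add_sq_real, hflip]
  linarith

lemma dist_le (hK : Convex ℝ K) (h : IsNearestPoint K u p) (hs : s ∈ K) :
    dist p s ≤ dist u s := by
  have := h.norm_sub_sq_add_norm_sub_sq_le hK hs
  rw [dist_eq_norm, dist_eq_norm]
  nlinarith [norm_nonneg (p - s), norm_nonneg (u - s), sq_nonneg ‖u - p‖]

lemma infDist_sq_add_infDist_sq_le {S : Set E} (hK : Convex ℝ K) (h : IsNearestPoint K u p)
    (hSK : S ⊆ K) (hS : S.Nonempty) :
    infDist p S ^ 2 + infDist u K ^ 2 ≤ infDist u S ^ 2 := by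
  have huK : infDist u K ≤ ‖u - p‖ := by
    simpa [dist_eq_norm] using infDist_le_dist_of_mem (x := u) h.1
  have hroot : √(infDist p S ^ 2 + ‖u - p‖ ^ 2) ≤ infDist u S := by
    refine (le_infDist hS).2 fun s hs => Real.sqrt_le_iff.2 ⟨dist_nonneg, ?_⟩
    have hps : infDist p S ≤ ‖p - s‖ := by
      simpa [dist_eq_norm] using infDist_le_dist_of_mem (x := p) hs
    have := h.norm_sub_sq_add_norm_sub_sq_le hK (hSK hs)
    rw [dist_eq_norm]
    nlinarith [infDist_nonneg (x := p) (s := S)]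
  have hsq := Real.sq_sqrt (by positivity : 0 ≤ infDist p S ^ 2 + ‖u - p‖ ^ 2)
  nlinarith [Real.sqrt_nonneg (infDist p S ^ 2 + ‖u - p‖ ^ 2), infDist_nonneg (x := u) (s := K)]

end IsNearestPoint

lemma infDist_sq_le_of_isNearestPoint {K S : Set E} {u p : E} {κ : ℝ} (hK : Convex ℝ K)
    (hSK : S ⊆ K) (hS : S.Nonempty) (hκ : 0 < κ)
    (hreg : infDist u S ≤ κ * infDist u K) (h : IsNearestPoint K u p) :
    infDist p S ^ 2 ≤ (1 - (1 / κ) ^ 2) * infDist u S ^ 2 := by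
  have hpyth := h.infDist_sq_add_infDist_sq_le hK hSK hS
  have hdiv : (1 / κ) * infDist u S ≤ infDist u K := by
    rw [one_div_mul_eq_div, div_le_iff₀' hκ]
    exact hreg
  have hsq := pow_le_pow_left₀ (mul_nonneg (one_div_pos.2 hκ).le infDist_nonneg) hdiv 2
  nlinarith

lemma infDist_inter_eq_zero_of_lt_one {X : Type*} [PseudoMetricSpace X] {A B : Set X} {z : X}
    {κ : ℝ} (hκ : κ < 1) (hAB : (A ∩ B).Nonempty)
    (hreg : infDist z (A ∩ B) ≤ κ * max (infDist z A) (infDist z B)) :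
    infDist z (A ∩ B) = 0 := by
  have hmax : max (infDist z A) (infDist z B) ≤ infDist z (A ∩ B) :=
    max_le (infDist_le_infDist_of_subset Set.inter_subset_left hAB)
      (infDist_le_infDist_of_subset Set.inter_subset_right hAB)
  have hmax0 : 0 ≤ max (infDist z A) (infDist z B) := le_max_of_le_left infDist_nonneg
  refine le_antisymm ?_ infDist_nonneg
  rcases le_or_gt 0 κ with hκ0 | hκ0
  · nlinarith [mul_le_mul_of_nonneg_left hmax hκ0]
  · nlinarith

lemma antitone_dist_of_alternating_projections {A B : Set E} {PA PB : E → E} {x : ℕ → E}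
    (hA : Convex ℝ A) (hB : Convex ℝ B)
    (hPA : ∀ z, IsNearestPoint A z (PA z)) (hPB : ∀ z, IsNearestPoint B z (PB z))
    (hodd : ∀ n, x (2 * n + 1) = PB (x (2 * n)))
    (heven : ∀ n, x (2 * n + 2) = PA (x (2 * n + 1))) {s : E} (hs : s ∈ A ∩ B) :
    Antitone fun k => dist (x k) s := by
  refine antitone_nat_of_succ_le fun k => ?_
  obtain ⟨n, rfl | rfl⟩ := Nat.even_or_odd' k
  · rw [hodd]
    exact (hPB _).dist_le hB hs.2
  · rw [heven]
    exact (hPA _).dist_le hA hs.1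

theorem MAP_linear_convergence_convex_general
    (A B : Set E)
    (hAconv : Convex ℝ A) (hBconv : Convex ℝ B)
    (xhat : E) (hxhat : xhat ∈ A ∩ B) (δ κ : ℝ)
    (hreg : ∀ x ∈ Metric.closedBall xhat δ,
        Metric.infDist x (A ∩ B) ≤ κ * max (Metric.infDist x A) (Metric.infDist x B))
    (PA PB : E → E)
    (hPA : ∀ x : E, PA x ∈ A ∧ ∀ y ∈ A, ‖x - PA x‖ ≤ ‖x - y‖)
    (hPB : ∀ x : E, PB x ∈ B ∧ ∀ y ∈ B, ‖x - PB x‖ ≤ ‖x - y‖)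
    (x : ℕ → E) (hx0 : x 0 ∈ Metric.closedBall xhat δ ∩ A)
    (hodd : ∀ n : ℕ, x (2 * n + 1) = PB (x (2 * n)))
    (heven : ∀ n : ℕ, x (2 * n + 2) = PA (x (2 * n + 1))) :
    ∀ n : ℕ,
      Metric.infDist (x (2 * n + 2)) (A ∩ B)
        ≤ (1 - (1 / κ) ^ 2) * Metric.infDist (x (2 * n)) (A ∩ B) := by
  intro n
  have hAB : (A ∩ B).Nonempty := ⟨xhat, hxhat⟩
  have hball (k : ℕ) : x k ∈ closedBall xhat δ :=
    (antitone_dist_of_alternating_projections hAconv hBconv hPA hPB hodd heven hxhat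
      k.zero_le).trans hx0.1
  rcases lt_or_ge κ 1 with hκ | hκ
  · rw [infDist_inter_eq_zero_of_lt_one hκ hAB (hreg _ (hball _)),
      infDist_inter_eq_zero_of_lt_one hκ hAB (hreg _ (hball _)), mul_zero]
  have hq : 0 ≤ 1 - (1 / κ) ^ 2 :=
    sub_nonneg.2 (pow_le_one₀ (one_div_nonneg.2 (by linarith)) ((div_le_one (by linarith)).2 hκ))
  have hxA : x (2 * n) ∈ A := by
    cases n with
    | zero => exact hx0.2
    | succ n => exact heven n ▸ (hPA _).1
  have hxB : x (2 * n + 1) ∈ B := hodd n ▸ (hPB _).1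
  have hregA := hreg _ (hball (2 * n))
  rw [infDist_zero_of_mem hxA, max_eq_right infDist_nonneg] at hregA
  have hregB := hreg _ (hball (2 * n + 1))
  rw [infDist_zero_of_mem hxB, max_eq_left infDist_nonneg] at hregB
  have hstepB := infDist_sq_le_of_isNearestPoint hBconv Set.inter_subset_right hAB
    (by linarith) hregA (hodd n ▸ hPB (x (2 * n)))
  have hstepA := infDist_sq_le_of_isNearestPoint hAconv Set.inter_subset_left hAB
    (by linarith) hregB (heven n ▸ hPA (x (2 * n + 1)))
  refine le_of_pow_le_pow_left₀ two_ne_zero (mul_nonneg hq infDist_nonneg) ?_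
  calc infDist (x (2 * n + 2)) (A ∩ B) ^ 2
      ≤ (1 - (1 / κ) ^ 2) * infDist (x (2 * n + 1)) (A ∩ B) ^ 2 := hstepA
    _ ≤ (1 - (1 / κ) ^ 2) * ((1 - (1 / κ) ^ 2) * infDist (x (2 * n)) (A ∩ B) ^ 2) :=
        mul_le_mul_of_nonneg_left hstepB hq
    _ = ((1 - (1 / κ) ^ 2) * infDist (x (2 * n)) (A ∩ B)) ^ 2 := by ring

/-- Linear convergence of the method of alternating projections for convex sets under
local linear regularity. -/
theorem MAP_linear_convergence_convex
    (A B : Set E) (hA : A.Nonempty) (hB : B.Nonempty)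
    (hAc : IsClosed A) (hBc : IsClosed B)
    (hAconv : Convex ℝ A) (hBconv : Convex ℝ B)
    (xhat : E) (hxhat : xhat ∈ A ∩ B) (δ κ : ℝ) (hδ : 0 < δ) (hκ : 0 < κ)
    (hreg : ∀ x ∈ Metric.closedBall xhat δ,
        Metric.infDist x (A ∩ B) ≤ κ * max (Metric.infDist x A) (Metric.infDist x B))
    (PA PB : E → E)
    (hPA : ∀ x : E, PA x ∈ A ∧ ∀ y ∈ A, ‖x - PA x‖ ≤ ‖x - y‖)
    (hPB : ∀ x : E, PB x ∈ B ∧ ∀ y ∈ B, ‖x - PB x‖ ≤ ‖x - y‖)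
    (x : ℕ → E) (hx0 : x 0 ∈ Metric.closedBall xhat δ ∩ A)
    (hodd : ∀ n : ℕ, x (2 * n + 1) = PB (x (2 * n)))
    (heven : ∀ n : ℕ, x (2 * n + 2) = PA (x (2 * n + 1))) :
    ∀ n : ℕ,
      Metric.infDist (x (2 * n + 2)) (A ∩ B)
        ≤ (1 - (1 / κ) ^ 2) * Metric.infDist (x (2 * n)) (A ∩ B) :=
  MAP_linear_convergence_convex_general A B hAconv hBconv xhat hxhat δ κ hreg PA PB hPA hPB x hx0
    hodd heven
end
end

section
/- Let A, B be closed subsets of E with B a linear subspace, and suppose {A,B} is locally linearly regular at x̂ ∈ S = A∩B on B_δ(x̂) with constant κ > 0. Suppose there is c ∈ (0,1) such that whenever x ∈ B_δ(x̂), y = P_B x, z ∈ P_A(2y − x), u is a proximal normal to A at z with ‖u‖ ≤ 1, and v ∈ B^⊥ with ‖v‖ ≤ 1, one has ⟨u, v⟩ ≥ −c. Then for all x ∈ B_δ(x̂) with P_A R_B x ⊂ B_δ(x̂) and all x₊ ∈ T_DR x: ‖x − x₊‖ ≥ (√(1−c)/κ) dist(x, S). -/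
open RealInnerProductSpace Metric

noncomputable section

variable {E : Type*} [NormedAddCommGroup E] [InnerProductSpace ℝ E]

/-! Write `y = P_B x`, `w = 2y - x = R_B x` and `z ∈ P_A w`, so that
`x - x₊ = y - z = (x - y) + (w - z)` with `x - y ∈ B^⊥` and `w - z` a proximal normal to `A` at `z`.
The angle condition gives `⟪w - z, x - y⟫ ≥ -c ‖w - z‖ ‖x - y‖`, whence
`‖x - x₊‖ ≥ √(1 - c) · max (‖w - z‖, ‖x - y‖) ≥ √(1 - c) · max (d_A w, d_B w)`.
Since `R_B` is an isometry fixing `B ⊇ S`, `d_S x = d_S w ≤ κ max (d_A w, d_B w)`. -/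

theorem sub_mem_pnCone {Ω : Set E} {w z : E} (hz : z ∈ projSet Ω w) : w - z ∈ pnCone Ω z :=
  ⟨1, zero_le_one, w, hz, (one_smul ℝ _).symm⟩

theorem smul_mem_pnCone {Ω : Set E} {z u : E} (hu : u ∈ pnCone Ω z) {t : ℝ} (ht : 0 ≤ t) :
    t • u ∈ pnCone Ω z := by
  obtain ⟨s, hs, w, hw, rfl⟩ := hu
  exact ⟨t * s, mul_nonneg ht hs, w, hw, (mul_smul t s _).symm⟩

theorem norm_inv_norm_smul_le_one (u : E) : ‖‖u‖⁻¹ • u‖ ≤ 1 := by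
  rw [norm_smul, norm_inv, norm_norm]
  exact inv_mul_le_one

theorem Submodule.sub_mem_orthogonal_of_forall_norm_sub_le {K : Submodule ℝ E} {x y : E}
    (hy : y ∈ K) (hmin : ∀ b ∈ K, ‖x - y‖ ≤ ‖x - b‖) : x - y ∈ Kᗮ := by
  refine (K.mem_orthogonal' _).2 ((K.norm_eq_iInf_iff_real_inner_eq_zero hy).1 ?_)
  exact le_antisymm (le_ciInf fun b => hmin b b.2) (ciInf_le (f := fun b : (K : Set E) => ‖x - b‖)
    ⟨0, by rintro _ ⟨b, rfl⟩; exact norm_nonneg _⟩ ⟨y, hy⟩)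

theorem Submodule.dist_two_smul_sub_eq {K : Submodule ℝ E} {x y s : E} (hy : y ∈ K)
    (hxy : x - y ∈ Kᗮ) (hs : s ∈ K) : dist ((2 : ℝ) • y - x) s = dist x s := by
  have horth : ⟪x - y, y - s⟫ = 0 := K.inner_left_of_mem_orthogonal (K.sub_mem hy hs) hxy
  calc dist ((2 : ℝ) • y - x) s = ‖(y - s) - (x - y)‖ := by rw [dist_eq_norm]; congr 1; module
    _ = ‖(y - s) + (x - y)‖ := norm_sub_eq_norm_add horth
    _ = dist x s := by rw [dist_eq_norm]; congr 1; abel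

theorem Metric.infDist_eq_of_forall_dist_eq {α : Type*} [PseudoMetricSpace α] {S : Set α} {x w : α}
    (h : ∀ s ∈ S, dist w s = dist x s) :
    infDist w S = infDist x S := by
  simp only [infDist_eq_iInf]
  exact iInf_congr fun s => h s s.2

theorem neg_mul_norm_mul_norm_le_inner {u v : E} {c : ℝ}
    (h : -c ≤ ⟪‖u‖⁻¹ • u, ‖v‖⁻¹ • v⟫) : -(c * ‖u‖ * ‖v‖) ≤ ⟪u, v⟫ := by
  rcases eq_or_ne u 0 with rfl | hu
  · simp
  rcases eq_or_ne v 0 with rfl | hv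
  · simp
  rw [real_inner_smul_left, real_inner_smul_right] at h
  have hpos : 0 < ‖u‖ * ‖v‖ := mul_pos (norm_pos_iff.2 hu) (norm_pos_iff.2 hv)
  have hscaled := mul_le_mul_of_nonneg_left h hpos.le
  field_simp at hscaled
  linarith

theorem sqrt_one_sub_mul_max_le_norm_add {p q : E} {c : ℝ} (hc0 : 0 ≤ c) (hc1 : c ≤ 1)
    (h : -(c * ‖p‖ * ‖q‖) ≤ ⟪p, q⟫) : √(1 - c) * max ‖p‖ ‖q‖ ≤ ‖p + q‖ := by
  refine le_of_pow_le_pow_left₀ two_ne_zero (norm_nonneg _) ?_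
  rw [mul_pow, Real.sq_sqrt (by linarith), norm_add_sq_real]
  rcases le_total ‖p‖ ‖q‖ with hpq | hpq
  · rw [max_eq_right hpq]; nlinarith [sq_nonneg (‖p‖ - ‖q‖), norm_nonneg p]
  · rw [max_eq_left hpq]; nlinarith [sq_nonneg (‖p‖ - ‖q‖), norm_nonneg q]

theorem TDR_coercive_subspace_general
    (A : Set E)
    (B : Submodule ℝ E)
    (PB : E → E)
    (hPB : ∀ x : E, PB x ∈ B ∧ ∀ y ∈ (B : Set E), ‖x - PB x‖ ≤ ‖x - y‖)
    (xhat : E) (hxhat : xhat ∈ A ∩ (B : Set E)) (δ κ c : ℝ)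
    (hκ : 0 < κ) (hc0 : 0 < c) (hc1 : c < 1)
    (hreg : ∀ w ∈ Metric.closedBall xhat δ,
        Metric.infDist w (A ∩ (B : Set E))
          ≤ κ * max (Metric.infDist w A) (Metric.infDist w (B : Set E)))
    (hang : ∀ x ∈ Metric.closedBall xhat δ,
        ∀ z ∈ projSet A ((2 : ℝ) • PB x - x),
          ∀ u ∈ pnCone A z, ‖u‖ ≤ 1 → ∀ v ∈ Bᗮ, ‖v‖ ≤ 1 → ⟪u, v⟫ ≥ -c) :
    ∀ x ∈ Metric.closedBall xhat δ,
      projSet A ((2 : ℝ) • PB x - x) ⊆ Metric.closedBall xhat δ →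
      ∀ z ∈ projSet A ((2 : ℝ) • PB x - x),
        ‖x - (z - PB x + x)‖
          ≥ (Real.sqrt (1 - c) / κ) * Metric.infDist x (A ∩ (B : Set E)) := by
  intro x hx _ z hz
  obtain ⟨hyB, hymin⟩ := hPB x
  set y := PB x
  set w := (2 : ℝ) • y - x
  have hxy : x - y ∈ Bᗮ := B.sub_mem_orthogonal_of_forall_norm_sub_le hyB hymin
  have hwB : ∀ s ∈ B, dist w s = dist x s := fun s hs => B.dist_two_smul_sub_eq hyB hxy hs
  have hw : w ∈ closedBall xhat δ := by rw [mem_closedBall, hwB xhat hxhat.2]; exact hx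
  have hdist_wB : infDist w B ≤ ‖x - y‖ :=
    (infDist_le_dist_of_mem hyB).trans_eq (by rw [dist_eq_norm, ← norm_neg]; congr 1; module)
  have hreg_x : infDist x (A ∩ B) ≤ κ * max ‖w - z‖ ‖x - y‖ :=
    calc infDist x (A ∩ B) = infDist w (A ∩ B) :=
          (infDist_eq_of_forall_dist_eq fun s hs => hwB s hs.2).symm
      _ ≤ κ * max (infDist w A) (infDist w B) := hreg w hw
      _ ≤ κ * max ‖w - z‖ ‖x - y‖ := by rw [← hz.2]; gcongr
  have hangle : -(c * ‖w - z‖ * ‖x - y‖) ≤ ⟪w - z, x - y⟫ :=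
    neg_mul_norm_mul_norm_le_inner <| hang x hx z hz _
      (smul_mem_pnCone (sub_mem_pnCone hz) (inv_nonneg.2 (norm_nonneg _)))
      (norm_inv_norm_smul_le_one _) _ (Bᗮ.smul_mem _ hxy) (norm_inv_norm_smul_le_one _)
  calc √(1 - c) / κ * infDist x (A ∩ B) ≤ √(1 - c) / κ * (κ * max ‖w - z‖ ‖x - y‖) := by
        gcongr
    _ = √(1 - c) * max ‖w - z‖ ‖x - y‖ := by field_simp
    _ ≤ ‖(w - z) + (x - y)‖ := sqrt_one_sub_mul_max_le_norm_add hc0.le hc1.le hangle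
    _ = ‖x - (z - y + x)‖ := by congr 1; module

/-- Coercivity of the Douglas–Rachford operator when one set is a subspace. -/
theorem TDR_coercive_subspace
    (A : Set E) (hA : A.Nonempty) (hAc : IsClosed A)
    (B : Submodule ℝ E)
    (PB : E → E)
    (hPB : ∀ x : E, PB x ∈ B ∧ ∀ y ∈ (B : Set E), ‖x - PB x‖ ≤ ‖x - y‖)
    (xhat : E) (hxhat : xhat ∈ A ∩ (B : Set E)) (δ κ c : ℝ)
    (hδ : 0 < δ) (hκ : 0 < κ) (hc0 : 0 < c) (hc1 : c < 1)
    (hreg : ∀ w ∈ Metric.closedBall xhat δ,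
        Metric.infDist w (A ∩ (B : Set E))
          ≤ κ * max (Metric.infDist w A) (Metric.infDist w (B : Set E)))
    (hang : ∀ x ∈ Metric.closedBall xhat δ,
        ∀ z ∈ projSet A ((2 : ℝ) • PB x - x),
          ∀ u ∈ pnCone A z, ‖u‖ ≤ 1 → ∀ v ∈ Bᗮ, ‖v‖ ≤ 1 → ⟪u, v⟫ ≥ -c) :
    ∀ x ∈ Metric.closedBall xhat δ,
      projSet A ((2 : ℝ) • PB x - x) ⊆ Metric.closedBall xhat δ →
      ∀ z ∈ projSet A ((2 : ℝ) • PB x - x),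
        ‖x - (z - PB x + x)‖
          ≥ (Real.sqrt (1 - c) / κ) * Metric.infDist x (A ∩ (B : Set E)) :=
  TDR_coercive_subspace_general A B PB hPB xhat hxhat δ κ c hκ hc0 hc1 hreg hang
end
end

section
/- Let A, B be linear subspaces of a Euclidean space E. The Douglas–Rachford iteration x_{n+1} = T_DR x_n, T_DR = ½(R_A R_B + Id), converges with a linear rate to A ∩ B from every starting point x₀ ∈ E if and only if A^⊥ ∩ B^⊥ = {0}. -/
/-!
`T = ½ (R_A R_B + Id)` averages the isometry `R_A R_B` with the identity, so by strict convexity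
of the norm `‖T x‖ < ‖x‖` unless `T x = x`. Moreover `R_A R_B x = x` forces `P_A x = P_B x`, which
identifies `Fix T = (A ∩ B) + (A^⊥ ∩ B^⊥)`. If `A^⊥ ∩ B^⊥ = {0}`, `T` therefore fixes `A ∩ B`
pointwise and strictly shrinks every nonzero vector of `(A ∩ B)^⊥`, uniformly so by compactness of
its unit sphere: this is the linear rate. Conversely, a nonzero `x ∈ A^⊥ ∩ B^⊥` is fixed by `T` and
lies at distance `‖x‖ > 0` from `A ∩ B`, so that distance never shrinks.
-/

open RealInnerProductSpace Metric

noncomputable section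

variable {E : Type*} [NormedAddCommGroup E] [InnerProductSpace ℝ E]

open Submodule

theorem ContinuousLinearMap.opNorm_lt_one_of_norm_lt {F G : Type*} [NormedAddCommGroup F]
    [NormedSpace ℝ F] [ProperSpace F] [NormedAddCommGroup G] [NormedSpace ℝ G] (f : F →L[ℝ] G)
    (h : ∀ x, x ≠ 0 → ‖f x‖ < ‖x‖) : ‖f‖ < 1 := by
  rcases subsingleton_or_nontrivial F with hF | hF
  · rw [f.opNorm_subsingleton]
    exact one_pos
  obtain ⟨u, hu, hmax⟩ := (isCompact_sphere (0 : F) 1).exists_isMaxOn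
    (NormedSpace.sphere_nonempty.mpr zero_le_one) f.continuous.norm.continuousOn
  have hu1 : ‖u‖ = 1 := mem_sphere_zero_iff_norm.mp hu
  calc ‖f‖ ≤ ‖f u‖ :=
        f.opNorm_le_of_unit_norm (norm_nonneg _) fun x hx => hmax (mem_sphere_zero_iff_norm.mpr hx)
    _ < 1 := hu1 ▸ h u (ne_of_mem_sphere hu one_ne_zero)

namespace Submodule

variable (K : Submodule ℝ E) [K.HasOrthogonalProjection]

theorem eq_starProjection_of_forall_norm_sub_le {x p : E} (hp : p ∈ K)
    (h : ∀ y ∈ K, ‖x - p‖ ≤ ‖x - y‖) : K.starProjection x = p := by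
  refine eq_starProjection_of_mem_of_inner_eq_zero hp
    ((K.norm_eq_iInf_iff_real_inner_eq_zero hp).mp (le_antisymm ?_ ?_))
  · exact le_ciInf fun y => h y y.2
  · exact ciInf_le ⟨0, Set.forall_mem_range.mpr fun _ => norm_nonneg _⟩ (⟨p, hp⟩ : (K : Set E))

theorem infDist_eq_norm_sub_starProjection (x : E) :
    infDist x K = ‖x - K.starProjection x‖ := by
  rw [starProjection_minimal, Metric.infDist_eq_iInf]
  simp [dist_eq_norm]

theorem infDist_apply_le_mul_infDist (f : E →ₗ[ℝ] E) {c : ℝ} (hK : ∀ p ∈ K, f p = p)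
    (hc : ∀ q ∈ Kᗮ, ‖f q‖ ≤ c * ‖q‖) (x : E) : infDist (f x) K ≤ c * infDist x K := by
  set p := K.starProjection x
  have hp : p ∈ K := K.starProjection_apply_mem x
  have hfx : f x - p = f (x - p) := by rw [map_sub, hK p hp]
  calc infDist (f x) K ≤ ‖f x - p‖ := dist_eq_norm (f x) p ▸ infDist_le_dist_of_mem hp
    _ ≤ c * ‖x - p‖ := hfx ▸ hc _ (K.sub_starProjection_mem_orthogonal x)
    _ = c * infDist x K := by rw [K.infDist_eq_norm_sub_starProjection]

end Submodule

section DouglasRachford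

variable (A B : Submodule ℝ E) [A.HasOrthogonalProjection] [B.HasOrthogonalProjection]

def drOperator : E →L[ℝ] E :=
  (1 / 2 : ℝ) • ((A.reflection : E →L[ℝ] E) ∘L (B.reflection : E →L[ℝ] E) +
    ContinuousLinearMap.id ℝ E)

variable {A B}

theorem drOperator_apply (x : E) :
    drOperator A B x = (1 / 2 : ℝ) • (A.reflection (B.reflection x) + x) :=
  rfl

theorem drOperator_eq_self_iff_reflection_reflection_eq_self {x : E} :
    drOperator A B x = x ↔ A.reflection (B.reflection x) = x := by
  rw [drOperator_apply]
  constructor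
  · intro h
    linear_combination (norm := module) (2 : ℝ) • h
  · intro h
    linear_combination (norm := module) (1 / 2 : ℝ) • h

theorem reflection_reflection_eq_self_iff {x : E} :
    A.reflection (B.reflection x) = x ↔ x ∈ A ⊓ B ⊔ Aᗮ ⊓ Bᗮ := by
  constructor
  · intro h
    have hAB : A.starProjection x = B.starProjection x := by
      have h' : B.reflection x = A.reflection x :=
        (A.reflection_reflection _).symm.trans (congrArg A.reflection h)
      rw [reflection_apply, reflection_apply] at h'
      linear_combination (norm := module) (-1 / 2 : ℝ) • sub_left_injective h'
    refine mem_sup.mpr ⟨B.starProjection x, ⟨hAB ▸ A.starProjection_apply_mem x,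
      B.starProjection_apply_mem x⟩, x - B.starProjection x,
      ⟨hAB ▸ A.sub_starProjection_mem_orthogonal x, B.sub_starProjection_mem_orthogonal x⟩,
      add_sub_cancel _ _⟩
  · intro h
    obtain ⟨p, hp, q, hq, rfl⟩ := mem_sup.mp h
    simp [reflection_mem_subspace_eq_self hp.1, reflection_mem_subspace_eq_self hp.2,
      reflection_mem_subspace_orthogonalComplement_eq_neg hq.1,
      reflection_mem_subspace_orthogonalComplement_eq_neg hq.2]

theorem drOperator_eq_self_iff {x : E} : drOperator A B x = x ↔ x ∈ A ⊓ B ⊔ Aᗮ ⊓ Bᗮ :=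
  drOperator_eq_self_iff_reflection_reflection_eq_self.trans reflection_reflection_eq_self_iff

theorem norm_drOperator_lt_iff {x : E} : ‖drOperator A B x‖ < ‖x‖ ↔ drOperator A B x ≠ x := by
  have hR : ‖A.reflection (B.reflection x)‖ = ‖x‖ := by simp
  rw [drOperator_apply, ← hR, norm_midpoint_lt_iff hR, ← drOperator_apply]
  exact (not_congr drOperator_eq_self_iff_reflection_reflection_eq_self).symm

end DouglasRachford

/-- For linear subspaces, the Douglas–Rachford iteration converges linearly to the
intersection from every starting point iff `A^⊥ ∩ B^⊥ = {0}`. -/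
theorem DR_subspaces_linear_iff
    [FiniteDimensional ℝ E]
    (A B : Submodule ℝ E)
    (PA PB : E → E)
    (hPA : ∀ x : E, PA x ∈ A ∧ ∀ y ∈ (A : Set E), ‖x - PA x‖ ≤ ‖x - y‖)
    (hPB : ∀ x : E, PB x ∈ B ∧ ∀ y ∈ (B : Set E), ‖x - PB x‖ ≤ ‖x - y‖)
    (T : E → E)
    (hT : ∀ x : E,
      T x = ((1 : ℝ) / 2) •
        (((2 : ℝ) • PA ((2 : ℝ) • PB x - x) - ((2 : ℝ) • PB x - x)) + x)) :
    (∃ ctil : ℝ, 0 ≤ ctil ∧ ctil < 1 ∧ ∀ x₀ : E, ∀ n : ℕ,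
        Metric.infDist (T^[n + 1] x₀) ((A ⊓ B : Submodule ℝ E) : Set E)
          ≤ ctil * Metric.infDist (T^[n] x₀) ((A ⊓ B : Submodule ℝ E) : Set E))
    ↔ Aᗮ ⊓ Bᗮ = ⊥ := by
  have hPA' : PA = A.starProjection :=
    funext fun x => (A.eq_starProjection_of_forall_norm_sub_le (hPA x).1 (hPA x).2).symm
  have hPB' : PB = B.starProjection :=
    funext fun x => (B.eq_starProjection_of_forall_norm_sub_le (hPB x).1 (hPB x).2).symm
  obtain rfl : T = drOperator A B := by
    funext x
    simp only [hT, hPA', hPB', drOperator_apply, reflection_apply, two_smul]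
  set S := A ⊓ B
  constructor
  · rintro ⟨c, -, hc1, hrate⟩
    refine eq_bot_iff.mpr fun x hx => ?_
    have hfix : drOperator A B x = x := drOperator_eq_self_iff.mpr (mem_sup_right hx)
    have hdist : infDist x S = ‖x‖ := by
      rw [infDist_eq_norm_sub_starProjection,
        (starProjection_apply_eq_zero_iff S).mpr (orthogonal_le inf_le_left hx.1), sub_zero]
    have hx1 := hrate x 0
    rw [Function.iterate_fixed hfix, Function.iterate_fixed hfix, hdist] at hx1
    exact (mem_bot ℝ).mpr (norm_eq_zero.mp (by nlinarith [norm_nonneg x]))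
  · intro hbot
    set f := drOperator A B ∘L Sᗮ.subtypeL
    have hf : ∀ q, q ≠ 0 → ‖f q‖ < ‖q‖ := by
      intro q hq
      show ‖drOperator A B q‖ < ‖(q : E)‖
      refine norm_drOperator_lt_iff.mpr fun hfix => hq ?_
      have hqS : (q : E) ∈ S := by
        simpa only [hbot, sup_bot_eq] using drOperator_eq_self_iff.mp hfix
      exact Subtype.ext (disjoint_def.mp S.orthogonal_disjoint q hqS q.2)
    refine ⟨‖f‖, norm_nonneg f, f.opNorm_lt_one_of_norm_lt hf, fun x n => ?_⟩
    rw [Function.iterate_succ_apply']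
    exact S.infDist_apply_le_mul_infDist (drOperator A B : E →ₗ[ℝ] E)
      (fun p hp => drOperator_eq_self_iff.mpr (mem_sup_left hp))
      (fun q hq => f.le_opNorm ⟨q, hq⟩) _
end
end
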